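/- arXiv:2407.07682 — 2 statements merged into one kernel-verified Lean document; each statement's English description precedes it below -/
import Mathlib

section
/- Let I = [0,1], Γ ⊂ [0,1]², and for ε > 0 define the ⌈1/ε⌉ × ⌈1/ε⌉ matrix Γ^ε by Γ^ε_{ij} = 1 if ([(i−1)ε, iε] × [(j−1)ε, jε]) ∩ Γ ≠ ∅ and 0 otherwise. Suppose Γ is the graph of a function T : [0,1] → [0,1] which is differentiable on each of a collection of pairwise disjoint open intervals (J_k) with |T'| ≥ 1/M on each J_k (for a positive integer M), with T mapping each J_k onto (0,1), strictly monotonically. Then for each column j, the number of i with Γ^ε_{ij} = 1 is at most 8(M+2)·S(A,ε) plus the contribution of the complement graph points, where A = [0,1] \ ∪_k J_k and S(A,ε) is the minimal number of intervals of length ≤ ε covering A; in particular the graph of T restricted to any single J_k meets at most M+2 grid boxes in any fixed row of the grid. -/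
open Set

/-- If `T` is differentiable on an open interval `J = (a,b)` with `|T'| ≥ 1/M` on `J`
(`M` a positive integer), then for any `c` and any `ε > 0`, the graph of `T` restricted
to `J` meets at most `M + 2` boxes of the `ε`-grid in the row `[c, c + ε]`: the set of
grid columns `i` containing a point `x ∈ J` with `c ≤ T x ≤ c + ε` is finite with at
most `M + 2` elements. -/
theorem stmt16 (a b : ℝ) (T T' : ℝ → ℝ) (M : ℕ) (hM : 0 < M)
    (hderiv : ∀ x ∈ Ioo a b, HasDerivAt T (T' x) x)
    (hbound : ∀ x ∈ Ioo a b, (1 : ℝ) / M ≤ |T' x|)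
    (ε : ℝ) (hε : 0 < ε) (c : ℝ) :
    {i : ℤ | ∃ x ∈ Ioo a b, (i : ℝ) * ε ≤ x ∧ x ≤ ((i : ℝ) + 1) * ε ∧
      c ≤ T x ∧ T x ≤ c + ε}.Finite ∧
    {i : ℤ | ∃ x ∈ Ioo a b, (i : ℝ) * ε ≤ x ∧ x ≤ ((i : ℝ) + 1) * ε ∧
      c ≤ T x ∧ T x ≤ c + ε}.ncard ≤ M + 2 := by
  have hMpos : (0:ℝ) < M := by exact_mod_cast hM
  set C : Set ℤ := {i : ℤ | ∃ x ∈ Ioo a b, (i : ℝ) * ε ≤ x ∧ x ≤ ((i : ℝ) + 1) * ε ∧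
      c ≤ T x ∧ T x ≤ c + ε} with hC
  set S : Set ℝ := {x | x ∈ Ioo a b ∧ c ≤ T x ∧ T x ≤ c + ε} with hS
  -- key pairwise bound
  have key : ∀ x ∈ S, ∀ y ∈ S, x ≤ y → y - x ≤ M * ε := by
    intro x hx y hy hxy
    rcases eq_or_lt_of_le hxy with rfl | hlt
    · nlinarith
    by_contra h
    push_neg at h
    have hsub : Icc x y ⊆ Ioo a b := fun z hz =>
      ⟨lt_of_lt_of_le hx.1.1 hz.1, lt_of_le_of_lt hz.2 hy.1.2⟩
    have hcont : ContinuousOn T (Icc x y) := fun z hz =>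
      ((hderiv z (hsub hz)).continuousAt).continuousWithinAt
    have hd : ∀ z ∈ Ioo x y, HasDerivAt T (T' z) z := fun z hz =>
      hderiv z (hsub (Ioo_subset_Icc_self hz))
    obtain ⟨z, hz, hzslope⟩ := exists_hasDerivAt_eq_slope T T' hlt hcont hd
    have hb := hbound z (hsub (Ioo_subset_Icc_self hz))
    rw [hzslope] at hb
    have h1 : |T y - T x| ≤ ε := by
      rw [abs_le]; constructor
      · linarith [hy.2.1, hx.2.2]
      · linarith [hx.2.1, hy.2.2]
    have hdpos : (0:ℝ) < y - x := by linarith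
    rw [abs_div, abs_of_pos hdpos, le_div_iff₀ hdpos] at hb
    have hinv : (M:ℝ) * (1/M) = 1 := mul_one_div_cancel (ne_of_gt hMpos)
    nlinarith [mul_le_mul_of_nonneg_left (hb.trans h1) hMpos.le]
  rcases C.eq_empty_or_nonempty with hCe | ⟨i0, hi0⟩
  · rw [hCe]; simp
  · obtain ⟨x0, hx0, hx0l, hx0r, hx0c1, hx0c2⟩ := hi0
    have hSne : S.Nonempty := ⟨x0, hx0, hx0c1, hx0c2⟩
    have hSbdd : BddBelow S := ⟨a, fun x hx => le_of_lt hx.1.1⟩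
    set u : ℝ := sInf S with hu
    have huub : ∀ x ∈ S, x ≤ u + M * ε := by
      intro x hx
      have : x - M * ε ≤ u := le_csInf hSne (by
        intro y hy
        rcases le_total x y with hxy | hyx
        · nlinarith [hε, hMpos]
        · linarith [key y hy x hx hyx])
      linarith
    have hulb : ∀ x ∈ S, u ≤ x := fun x hx => csInf_le hSbdd hx
    set n0 : ℤ := ⌊u / ε⌋ with hn0
    have hfl : (n0:ℝ) * ε ≤ u := by
      rw [← le_div_iff₀ hε]; exact Int.floor_le _
    have hfu : u < ((n0:ℝ) + 1) * ε := by
      rw [← div_lt_iff₀ hε]; exact_mod_cast Int.lt_floor_add_one (u / ε)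
    have hsubC : C ⊆ ↑(Finset.Icc (n0 - 1) (n0 + M)) := by
      intro i hi
      obtain ⟨x, hxab, hxl, hxr, hc1, hc2⟩ := hi
      have hxS : x ∈ S := ⟨hxab, hc1, hc2⟩
      have h1 : (i:ℝ) * ε < ((n0:ℝ) + 1 + M) * ε := by
        have := huub x hxS
        nlinarith [hfu]
      have h2 : ((n0:ℝ) - 1 + 1) * ε ≤ ((i:ℝ) + 1) * ε := by
        have := hulb x hxS
        nlinarith [hfl]
      have hi1 : (i:ℝ) < (n0:ℝ) + 1 + M := lt_of_mul_lt_mul_right h1 hε.le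
      have hi2 : (n0:ℝ) - 1 + 1 ≤ (i:ℝ) + 1 := le_of_mul_le_mul_right h2 hε
      have hi1' : i < n0 + 1 + M := by exact_mod_cast hi1
      have hi2' : n0 - 1 ≤ i := by
        have : (n0:ℝ) - 1 ≤ (i:ℝ) := by linarith
        exact_mod_cast this
      simp only [Finset.coe_Icc, mem_Icc]
      omega
    constructor
    · exact Set.Finite.subset (Finset.Icc (n0-1) (n0+M)).finite_toSet hsubC
    · calc C.ncard ≤ (↑(Finset.Icc (n0 - 1) (n0 + M)) : Set ℤ).ncard :=
            Set.ncard_le_ncard hsubC (Finset.Icc (n0-1) (n0+M)).finite_toSet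
        _ = (Finset.Icc (n0 - 1) (n0 + M)).card := Set.ncard_coe_finset _
        _ ≤ M + 2 := by rw [Int.card_Icc]; omega
end

section
/- Consider the sequence of 0–1-weighted recursions x_{n+1}⁰ = (N−k+1)·x_n^{k−1}, x_{n+1}¹ = x_n⁰ + x_n¹ + ⋯ + x_n^{k−1}, and x_{n+1}^j = x_n^{j−1} + x_n^{k−1} for 2 ≤ j ≤ k−1, encoded by a k × k matrix A = A_N (depending on a parameter N ≥ k). Then every entry of A^k is a polynomial in N of degree at most 1; consequently there is a constant C ≥ 1 independent of N with ‖A^k‖ ≤ C·N (sum norm), and hence the spectral radius satisfies r(A) ≤ (C·N)^{1/k}. -/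
/-!
Write `A_N = B + N • E` with `E` the matrix unit at `(0, k-1)`: the parameter only enters through
the edge `0 → k-1` of the transition graph. A path from `k-1` back to `0` needs `k-1` steps, so
`E * B ^ m * E = (B ^ m) (k-1) 0 • E = 0` for `m ≤ k-2`, and in the expansion of `(B + N • E) ^ k`
every word containing `E` twice vanishes. Hence `A_N ^ k = B ^ k + N • ∑ B ^ j * E * B ^ (k-1-j)`
is affine in `N`. An eigenvalue `μ` of `A_N` gives the eigenvalue `μ ^ k` of `A_N ^ k`, and
Gershgorin's theorem bounds it by the sum norm of `A_N ^ k`.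
-/

/-- The `k × k` matrix encoding the delayed-full-shift recursion: first row
`(0,…,0, N-k+1)`, second row all ones, and for rows `r ≥ 2` (0-indexed) ones exactly at
columns `r - 1` and `k - 1`. -/
noncomputable def Amat (k : ℕ) (N : ℝ) : Matrix (Fin k) (Fin k) ℝ := fun i j =>
  if i.val = 0 then (if j.val = k - 1 then N - k + 1 else 0)
  else if i.val = 1 then 1
  else if j.val = i.val - 1 ∨ j.val = k - 1 then 1 else 0

open Finset Matrix

theorem add_smul_pow_eq_of_mul_pow_mul_eq_zero {R A : Type*} [CommSemiring R] [Semiring A]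
    [Algebra R A] {B E : A} {n : ℕ} (hE : ∀ m, m + 2 ≤ n → E * B ^ m * E = 0) (c : R) :
    (B + c • E) ^ n = B ^ n + c • ∑ j ∈ range n, B ^ j * E * B ^ (n - 1 - j) := by
  induction n with
  | zero => simp
  | succ n ih =>
    have hSE : (∑ j ∈ range n, B ^ j * E * B ^ (n - 1 - j)) * E = 0 := by
      rw [sum_mul]
      refine sum_eq_zero fun j hj => ?_
      rw [mul_assoc, mul_assoc, ← mul_assoc E, hE _ (by have := mem_range.1 hj; omega), mul_zero]
    have hS : ∑ j ∈ range (n + 1), B ^ j * E * B ^ (n - j) =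
        (∑ j ∈ range n, B ^ j * E * B ^ (n - 1 - j)) * B + B ^ n * E := by
      rw [sum_range_succ, sum_mul, Nat.sub_self, pow_zero, mul_one]
      congr 1
      refine sum_congr rfl fun j hj => ?_
      rw [mul_assoc (B ^ j * E), ← pow_succ,
        show n - 1 - j + 1 = n - j by have := mem_range.1 hj; omega]
    rw [pow_succ, ih fun m hm => hE m (by omega), Nat.add_sub_cancel, hS]
    simp only [add_mul, mul_add, smul_mul_assoc, mul_smul_comm, hSE, smul_zero, add_zero,
      smul_add, ← pow_succ]
    abel

theorem Matrix.norm_le_sum_norm_of_mulVec_eq_smul {K ι : Type*} [NormedField K] [Fintype ι]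
    [DecidableEq ι] {A : Matrix ι ι K} {μ : K} {v : ι → K} (hv : v ≠ 0) (h : A *ᵥ v = μ • v) :
    ‖μ‖ ≤ ∑ i, ∑ j, ‖A i j‖ := by
  obtain ⟨i, hi⟩ := eigenvalue_mem_ball
    (Module.End.hasEigenvalue_of_hasEigenvector (f := toLin' A) ⟨by simpa, hv⟩)
  calc ‖μ‖ ≤ ‖A i i‖ + ∑ j ∈ univ.erase i, ‖A i j‖ := norm_le_of_mem_closedBall hi
    _ = ∑ j, ‖A i j‖ := add_sum_erase _ (fun j => ‖A i j‖) (mem_univ i)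
    _ ≤ ∑ i, ∑ j, ‖A i j‖ :=
        single_le_sum (f := fun i => ∑ j, ‖A i j‖) (fun _ _ => sum_nonneg fun _ _ => norm_nonneg _)
          (mem_univ i)

theorem Matrix.norm_pow_le_sum_abs_pow_of_map_ofReal_mulVec_eq_smul {ι : Type*} [Fintype ι]
    [DecidableEq ι] {A : Matrix ι ι ℝ} {μ : ℂ} {v : ι → ℂ} (hv : v ≠ 0)
    (h : A.map Complex.ofReal *ᵥ v = μ • v) (m : ℕ) : ‖μ‖ ^ m ≤ ∑ i, ∑ j, |(A ^ m) i j| := by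
  have hvec : Module.End.HasEigenvector (toLinAlgEquiv' (A.map Complex.ofReal)) μ v :=
    ⟨by simpa, hv⟩
  have hpow := hvec.pow_apply m
  have hmap : (A ^ m).map Complex.ofReal = A.map Complex.ofReal ^ m :=
    A.map_pow Complex.ofRealHom m
  rw [← map_pow, toLinAlgEquiv'_apply, ← hmap] at hpow
  simpa [← norm_pow] using norm_le_sum_norm_of_mulVec_eq_smul hv hpow

theorem Amat_eq_add_single (n : ℕ) (N : ℝ) :
    Amat (n + 2) N = Amat (n + 2) 0 + N • single 0 (Fin.last (n + 1)) 1 := by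
  ext i j
  simp only [Amat, Matrix.add_apply, Matrix.smul_apply, smul_eq_mul, single_apply, Fin.ext_iff,
    Fin.val_zero, Fin.val_last]
  split_ifs <;> first | (exfalso; omega) | ring

theorem Amat_pow_apply_zero_of_lt {n m : ℕ} (N : ℝ) {i : Fin (n + 2)} (hi : m < i.val) :
    (Amat (n + 2) N ^ m) i 0 = 0 := by
  induction m generalizing i with
  | zero => exact one_apply_ne (by rintro rfl; simp at hi)
  | succ m ih =>
    rw [pow_succ', mul_apply]
    refine sum_eq_zero fun l _ => ?_
    simp only [Amat, if_neg (show i.val ≠ 0 by omega), if_neg (show i.val ≠ 1 by omega)]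
    split_ifs with hl
    · rw [ih (by have := i.isLt; omega), mul_zero]
    · rw [zero_mul]

theorem abs_mul_add_le_of_one_le {p q N : ℝ} (hN : 1 ≤ N) : |p * N + q| ≤ (|p| + |q|) * N := by
  calc |p * N + q| ≤ |p| * N + |q| := by
        simpa only [abs_mul, abs_of_pos (zero_lt_one.trans_le hN)] using abs_add_le (p * N) q
    _ ≤ (|p| + |q|) * N := by nlinarith [abs_nonneg q]

/-- Every entry of `(Amat k N)^k` is polynomial in `N` of degree at most one; hence there is
`C ≥ 1`, independent of `N`, with `‖(Amat k N)^k‖ ≤ C·N` (sum norm), and consequently every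
eigenvalue `μ` of `Amat k N` satisfies `|μ| ≤ (C·N)^(1/k)`, i.e. `r(A) ≤ (C·N)^(1/k)`. -/
theorem stmt19 (k : ℕ) (hk : 2 ≤ k) :
    ∃ (P Q : Matrix (Fin k) (Fin k) ℝ) (C : ℝ), 1 ≤ C ∧
      ∀ N : ℝ, (k : ℝ) ≤ N →
        (∀ i j, ((Amat k N) ^ k) i j = P i j * N + Q i j) ∧
        (∑ i, ∑ j, |((Amat k N) ^ k) i j| ≤ C * N) ∧
        (∀ (μ : ℂ) (v : Fin k → ℂ), v ≠ 0 →
          ((Amat k N).map Complex.ofReal).mulVec v = μ • v →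
          ‖μ‖ ≤ (C * N) ^ ((k : ℝ)⁻¹)) := by
  obtain ⟨n, rfl⟩ := Nat.exists_eq_add_of_le' hk
  set B := Amat (n + 2) 0
  set E : Matrix (Fin (n + 2)) (Fin (n + 2)) ℝ := single 0 (Fin.last (n + 1)) 1
  set P := ∑ j ∈ range (n + 2), B ^ j * E * B ^ (n + 2 - 1 - j)
  set Q := B ^ (n + 2)
  set C := ∑ i, ∑ j, (|P i j| + |Q i j|) + 1
  have hC : 1 ≤ C := le_add_of_nonneg_left (by positivity)
  have hpow (N : ℝ) : Amat (n + 2) N ^ (n + 2) = Q + N • P := by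
    rw [Amat_eq_add_single]
    refine add_smul_pow_eq_of_mul_pow_mul_eq_zero (B := B) (E := E) (fun m hm => ?_) N
    rw [single_mul_mul_single, Amat_pow_apply_zero_of_lt 0 (by simp only [Fin.val_last]; omega),
      mul_zero, zero_mul, single_zero]
  refine ⟨P, Q, C, hC, fun N hN => ?_⟩
  have hN : 1 ≤ N := le_trans (by norm_cast; omega) hN
  have hentry (i j) : (Amat (n + 2) N ^ (n + 2)) i j = P i j * N + Q i j := by
    rw [hpow, Matrix.add_apply, Matrix.smul_apply, smul_eq_mul, mul_comm, add_comm]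
  have hsum : ∑ i, ∑ j, |(Amat (n + 2) N ^ (n + 2)) i j| ≤ C * N :=
    calc ∑ i, ∑ j, |(Amat (n + 2) N ^ (n + 2)) i j|
        ≤ ∑ i, ∑ j, (|P i j| + |Q i j|) * N := by
          simp only [hentry]
          gcongr
          exact abs_mul_add_le_of_one_le hN
      _ ≤ C * N := by
          simp only [← sum_mul]
          gcongr
          exact le_add_of_nonneg_right zero_le_one
  refine ⟨hentry, hsum, fun μ v hv hμ => ?_⟩
  rw [Real.le_rpow_inv_iff_of_pos (norm_nonneg _) (by nlinarith) (by positivity),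
    Real.rpow_natCast]
  exact (norm_pow_le_sum_abs_pow_of_map_ofReal_mulVec_eq_smul hv hμ _).trans hsum
end
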